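/- There exist constants C and N such that for every n ≥ N the following holds under the Setup with t = 2, together with the Apex assumption: | ∑_{F ∈ M_u^c ∖ ({F_0} ∪ N^d(F_0))} f(∂F) − (n²/2 − 7n/2) | ≤ C. -/

import Mathlib

open Finset Matrix

/-- A simplicial complex on vertex set `{1,…,n}` (modelled as `Fin n`):
a collection of nonempty subsets closed under taking nonempty subsets
and containing every singleton. -/
structure SimplicialComplex (n : ℕ) where
  faces : Finset (Finset (Fin n))
  nonempty_mem : ∀ F ∈ faces, F.Nonempty
  down_closed : ∀ F ∈ faces, ∀ G : Finset (Fin n), G ⊆ F → G.Nonempty → G ∈ faces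
  singleton_mem : ∀ x : Fin n, {x} ∈ faces

namespace SimplicialComplex

variable {n : ℕ}

/-- `S_i(K)`: the `i`-faces, i.e. faces of cardinality `i+1`. -/
def iFaces (K : SimplicialComplex n) (i : ℕ) : Finset (Finset (Fin n)) :=
  K.faces.filter (fun F => F.card = i + 1)

/-- `K` is pure `r`-dimensional: every maximal face has cardinality `r+1`. -/
def IsPure (K : SimplicialComplex n) (r : ℕ) : Prop :=
  ∀ F ∈ K.faces, (∀ G ∈ K.faces, F ⊆ G → F = G) → F.card = r + 1

/-- The signless incidence matrix `B_{i+1}(K)`, with rows indexed by `S_i(K)` and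
columns indexed by `S_{i+1}(K)`; entry is `1` if the row face is contained in the
column face, `0` otherwise. -/
def signlessInc (K : SimplicialComplex n) (i : ℕ) :
    Matrix ↥(K.iFaces i) ↥(K.iFaces (i+1)) ℝ :=
  Matrix.of fun F Fb => if (F : Finset (Fin n)) ⊆ (Fb : Finset (Fin n)) then 1 else 0

/-- The `i`-th up signless Laplacian `Q_i^{up}(K) = B_{i+1} B_{i+1}ᵀ`. -/
def Qup (K : SimplicialComplex n) (i : ℕ) :
    Matrix ↥(K.iFaces i) ↥(K.iFaces i) ℝ :=
  K.signlessInc i * (K.signlessInc i)ᵀ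

/-- The signless Laplacian spectral radius `q_i(K)`: the largest eigenvalue of
`Q_i^{up}(K)`. -/
noncomputable def specRad (K : SimplicialComplex n) (i : ℕ) : ℝ :=
  sSup {μ : ℝ | ∃ v : ↥(K.iFaces i) → ℝ, v ≠ 0 ∧ (K.Qup i).mulVec v = μ • v}

/-- The signed boundary matrix `∂_{i+1}(K)`, with rows indexed by `S_i(K)` and columns
indexed by `S_{i+1}(K)`: the entry in position `(F ∖ {v_j}, F)` is `(-1)^j`, where the
vertices of `F` are listed in increasing order `v_0 < ⋯ < v_{i+1}`. -/
def signedBoundary (K : SimplicialComplex n) (i : ℕ) :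
    Matrix ↥(K.iFaces i) ↥(K.iFaces (i+1)) ℝ :=
  Matrix.of fun G Fb =>
    if (G : Finset (Fin n)) ⊆ (Fb : Finset (Fin n)) then
      ∑ v ∈ (Fb : Finset (Fin n)) \ (G : Finset (Fin n)),
        (-1 : ℝ) ^ (((Fb : Finset (Fin n)).filter (fun w => w < v)).card)
    else 0

/-- The rank of `∂_i(K)` (with `∂_0 := 0`). -/
noncomputable def boundaryRank (K : SimplicialComplex n) : ℕ → ℕ
  | 0 => 0
  | (i+1) => (K.signedBoundary i).rank

/-- The `i`-th Betti number (with real coefficients):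
`β_i(K) = nullity(∂_i(K)) − rank(∂_{i+1}(K))`. -/
noncomputable def betti (K : SimplicialComplex n) (i : ℕ) : ℕ :=
  ((K.iFaces i).card - K.boundaryRank i) - K.boundaryRank (i+1)

/-- For a vector `f` indexed by `S_i(K)` and a set `Fb`, the quantity
`f(∂Fb) = ∑_{F ∈ S_i(K), F ⊆ Fb} f(F)`. -/
noncomputable def bSum (K : SimplicialComplex n) (i : ℕ) (f : ↥(K.iFaces i) → ℝ)
    (Fb : Finset (Fin n)) : ℝ :=
  ∑ F : ↥(K.iFaces i), if (F : Finset (Fin n)) ⊆ Fb then f F else 0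

/-- `N^d(F)`: the set of down neighbors of the 2-face `F`, i.e. the 2-faces distinct
from `F` sharing a 1-face with `F`. -/
def downNbrs (K : SimplicialComplex n) (F : Finset (Fin n)) : Finset (Finset (Fin n)) :=
  (K.iFaces 2).filter (fun F' => F' ≠ F ∧ (F' ∩ F).card = 2)

/-- `N^d(F,x) = { {x} ∪ G ∈ S_2(K) : G ⊂ F, |G| = 2 }`. -/
def downNbrsAt (K : SimplicialComplex n) (F : Finset (Fin n)) (x : Fin n) :
    Finset (Finset (Fin n)) :=
  (K.iFaces 2).filter (fun F' => ∃ G ⊆ F, G.card = 2 ∧ F' = insert x G)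

end SimplicialComplex

open SimplicialComplex

/-- `K(n,r,t)`: pure `r`-dimensional complexes on `{1,…,n}` with `β_r = t`. -/
def Kfam (n r t : ℕ) : Set (SimplicialComplex n) :=
  {K | K.IsPure r ∧ K.betti r = t}

namespace SimplicialComplex

variable {n : ℕ}

/-- `A = {1,…,n} ∖ F₀`. -/
def Aset (F0 : Finset (Fin n)) : Finset (Fin n) := Finset.univ \ F0

/-- `A_i = { x ∈ A : |N^d(F₀,x)| = i }`. -/
def Ai (K : SimplicialComplex n) (F0 : Finset (Fin n)) (i : ℕ) : Finset (Fin n) :=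
  (Aset F0).filter (fun x => (K.downNbrsAt F0 x).card = i)

/-- `A_{≤i} = { x ∈ A : |N^d(F₀,x)| ≤ i }`. -/
def Ale (K : SimplicialComplex n) (F0 : Finset (Fin n)) (i : ℕ) : Finset (Fin n) :=
  (Aset F0).filter (fun x => (K.downNbrsAt F0 x).card ≤ i)

/-- `A_2^x = { y ∈ A_2 : (F₀ ∖ {x}) ∪ {y} ∉ S_2(K) }`. -/
def A2x (K : SimplicialComplex n) (F0 : Finset (Fin n)) (x : Fin n) : Finset (Fin n) :=
  (K.Ai F0 2).filter (fun y => insert y (F0.erase x) ∉ K.iFaces 2)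

/-- `M_u`: the set of 2-faces of `K` not containing `u`. -/
def Mu (K : SimplicialComplex n) (u : Fin n) : Finset (Finset (Fin n)) :=
  (K.iFaces 2).filter (fun F => u ∉ F)

/-- `M_u(vw)`: members of `M_u` containing `{v,w}`. -/
def MuVW (K : SimplicialComplex n) (u v w : Fin n) : Finset (Finset (Fin n)) :=
  (K.Mu u).filter (fun F => v ∈ F ∧ w ∈ F)

/-- `M_u^c = S_2(K) ∖ M_u`. -/
def Muc (K : SimplicialComplex n) (u : Fin n) : Finset (Finset (Fin n)) :=
  K.iFaces 2 \ K.Mu u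

/-- `d_{M_u}(G) = |{ F ∈ M_u : G ⊂ F }|`. -/
def dMu (K : SimplicialComplex n) (u : Fin n) (G : Finset (Fin n)) : ℕ :=
  ((K.Mu u).filter (fun F => G ⊆ F)).card

/-- Apex assumption: every 3-subset of the vertex set containing `u` is a 2-face of `K`. -/
def Apex (K : SimplicialComplex n) (u : Fin n) : Prop :=
  ∀ F : Finset (Fin n), F.card = 3 → u ∈ F → F ∈ K.faces

/-- The Setup of the paper: `K ∈ K(n,2,t)` maximizes the signless Laplacian spectral
radius; `f` is an entrywise nonnegative eigenvector of `Q_1^{up}(K)` for the eigenvalue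
`q₁(K)`, normalized so that `max { f(∂F) : F ∈ S_2(K) } = 1`, and `F₀ = {u,v,w}`
is a 2-face attaining this maximum, with the labelling `|A_2^u| ≥ |A_2^v| ≥ |A_2^w|`. -/
def Setup (n t : ℕ) (K : SimplicialComplex n) (f : ↥(K.iFaces 1) → ℝ)
    (u v w : Fin n) : Prop :=
  K ∈ Kfam n 2 t ∧
  (∀ L ∈ Kfam n 2 t, L.specRad 1 ≤ K.specRad 1) ∧
  f ≠ 0 ∧ (∀ e, 0 ≤ f e) ∧
  (K.Qup 1).mulVec f = (K.specRad 1) • f ∧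
  ({u,v,w} : Finset (Fin n)) ∈ K.iFaces 2 ∧
  (∀ F ∈ K.iFaces 2, K.bSum 1 f F ≤ 1) ∧
  K.bSum 1 f {u,v,w} = 1 ∧
  (K.A2x {u,v,w} v).card ≤ (K.A2x {u,v,w} u).card ∧
  (K.A2x {u,v,w} w).card ≤ (K.A2x {u,v,w} v).card

/-- A face of the tented complex `T_n^r` with apex `u`: a nonempty subset of
`{u} ∪ A` for some `r`-subset `A` of the vertices other than `u`. -/
def TentFace (r : ℕ) (u : Fin n) (G : Finset (Fin n)) : Prop :=
  G.Nonempty ∧ ∃ A : Finset (Fin n), u ∉ A ∧ A.card = r ∧ G ⊆ insert u A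

end SimplicialComplex

/-!
Write `g F = f(∂F)`. Since every edge is present, the eigen-equation for `f` becomes
`(q - 3) g F = ∑_{G ∈ N^d(F)} g G` on 2-faces. The faces of `M_u` give independent cycles (the
boundaries of the tetrahedra `F ∪ {u}`), so `|M_u| ≤ β₂ = 2`; all other 2-faces form the full cone
over `u`, in which every face has exactly `2(n - 3)` down neighbours. Summing the equation over the
cone gives `q - 3 ≥ 2(n - 3)`. Applying it at `F₀` and then at each cone neighbour of `F₀` bounds
the total deficiency `∑ (1 - g)` over faces two down-steps from `F₀` by `16`, and every cone face
outside `{F₀} ∪ N^d(F₀)` is such a face. There are `n²/2 - 7n/2 + 6` of them.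
-/

theorem Finset.sum_le_sum_sum_of_forall_exists {ι α : Type*} [DecidableEq α] {s : Finset α}
    {I : Finset ι} {S : ι → Finset α} {h : α → ℝ} (hh : ∀ i ∈ I, ∀ x ∈ S i, 0 ≤ h x)
    (hcov : ∀ x ∈ s, ∃ i ∈ I, x ∈ S i) : ∑ x ∈ s, h x ≤ ∑ i ∈ I, ∑ x ∈ S i, h x := by
  have hsub : s ⊆ (I.sigma S).image Sigma.snd := fun x hx => by
    obtain ⟨i, hi, hx⟩ := hcov x hx
    exact mem_image.2 ⟨⟨i, x⟩, mem_sigma.2 ⟨hi, hx⟩, rfl⟩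
  have himage : ∀ x ∈ (I.sigma S).image Sigma.snd, 0 ≤ h x := fun x hx => by
    obtain ⟨⟨i, x⟩, hix, rfl⟩ := mem_image.1 hx
    exact hh i (mem_sigma.1 hix).1 x (mem_sigma.1 hix).2
  calc ∑ x ∈ s, h x ≤ ∑ x ∈ (I.sigma S).image Sigma.snd, h x :=
        sum_le_sum_of_subset_of_nonneg hsub fun x hx _ => himage x hx
    _ ≤ ∑ p ∈ I.sigma S, h p.2 := sum_image_le_of_nonneg himage
    _ = ∑ i ∈ I, ∑ x ∈ S i, h x := sum_sigma I S fun p => h p.2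

namespace SimplicialComplex

variable {n : ℕ} {K : SimplicialComplex n} {u : Fin n}

theorem mem_iFaces {i : ℕ} {F : Finset (Fin n)} :
    F ∈ K.iFaces i ↔ F ∈ K.faces ∧ F.card = i + 1 :=
  mem_filter

theorem iFaces_eq_empty_of_isPure {r i : ℕ} (hP : K.IsPure r) (hri : r < i) :
    K.iFaces i = ∅ := by
  refine eq_empty_of_forall_notMem fun F hF => ?_
  obtain ⟨hFK, hFcard⟩ := mem_iFaces.1 hF
  obtain ⟨G, hFG, hGmax⟩ := K.faces.exists_le_maximal hFK
  have hG : G.card = r + 1 :=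
    hP G hGmax.1 fun G' hG' hGG' => le_antisymm hGG' (hGmax.2 hG' hGG')
  have := card_le_card hFG
  omega

theorem finrank_ker_signedBoundary (i : ℕ) :
    Module.finrank ℝ (LinearMap.ker (K.signedBoundary i).mulVecLin)
      = (K.iFaces (i + 1)).card - K.boundaryRank (i + 1) := by
  have h := LinearMap.finrank_range_add_finrank_ker (K.signedBoundary i).mulVecLin
  rw [Module.finrank_fintype_fun_eq_card, Fintype.card_coe] at h
  rw [← h, boundaryRank, Matrix.rank]
  omega

theorem betti_eq_finrank_ker_of_isPure {i : ℕ} (hP : K.IsPure (i + 1)) :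
    K.betti (i + 1) = Module.finrank ℝ (LinearMap.ker (K.signedBoundary i).mulVecLin) := by
  have hrank : K.boundaryRank (i + 2) = 0 := by
    have h := (K.signedBoundary (i + 1)).rank_le_card_width
    have hempty : (K.iFaces (i + 1 + 1)).card = 0 := by
      rw [iFaces_eq_empty_of_isPure hP (by omega), card_empty]
    rw [Fintype.card_coe, hempty] at h
    exact Nat.le_zero.1 h
  rw [betti, hrank, finrank_ker_signedBoundary]
  rfl

def incidenceSign (G W : Finset (Fin n)) : ℝ :=
  if G ⊆ W then ∑ v ∈ W \ G, (-1 : ℝ) ^ (W.filter (· < v)).card else 0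

theorem incidenceSign_erase {W : Finset (Fin n)} {r : Fin n} (hr : r ∈ W) :
    incidenceSign (W.erase r) W = (-1) ^ (W.filter (· < r)).card := by
  rw [incidenceSign, if_pos (erase_subset r W), sdiff_erase_self hr, sum_singleton]

theorem incidenceSign_eq_zero_of_not_subset {G W : Finset (Fin n)} (h : ¬ G ⊆ W) :
    incidenceSign G W = 0 :=
  if_neg h

/-- The sign cancellation behind `∂ ∘ ∂ = 0`. -/
theorem incidenceSign_erase_mul_add_eq_zero {e W : Finset (Fin n)} {p q : Fin n}
    (hp : p ∈ W) (hq : q ∈ W) (hpq : p ≠ q) (he : e = (W.erase p).erase q) :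
    incidenceSign e (W.erase p) * incidenceSign (W.erase p) W
      + incidenceSign e (W.erase q) * incidenceSign (W.erase q) W = 0 := by
  wlog hlt : p < q generalizing p q
  · rw [add_comm]
    exact this hq hp hpq.symm (he.trans erase_right_comm)
      (lt_of_le_of_ne (not_lt.1 hlt) hpq.symm)
  have hep : incidenceSign e (W.erase p) = (-1) ^ ((W.erase p).filter (· < q)).card := by
    rw [he]; exact incidenceSign_erase (mem_erase.2 ⟨hpq.symm, hq⟩)
  have heq : incidenceSign e (W.erase q) = (-1) ^ ((W.erase q).filter (· < p)).card := by
    rw [he, erase_right_comm]; exact incidenceSign_erase (mem_erase.2 ⟨hpq, hp⟩)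
  have hqp : q ∉ W.filter (· < p) := fun h => lt_asymm hlt (mem_filter.1 h).2
  rw [hep, heq, incidenceSign_erase hp, incidenceSign_erase hq, filter_erase, filter_erase,
    card_erase_of_mem (mem_filter.2 ⟨hp, hlt⟩), erase_eq_of_notMem hqp]
  have hpos : 0 < (W.filter (· < q)).card := card_pos.2 ⟨p, mem_filter.2 ⟨hp, hlt⟩⟩
  obtain ⟨k, hk⟩ := Nat.exists_eq_add_of_lt hpos
  rw [hk, Nat.add_sub_cancel]
  ring

def simplexBoundary (K : SimplicialComplex n) (i : ℕ) (W : Finset (Fin n)) :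
    K.iFaces (i + 1) → ℝ :=
  fun G => incidenceSign (G : Finset (Fin n)) W

theorem incidenceSign_mul_incidenceSign_eq_zero {e G W : Finset (Fin n)}
    (h : ¬ (e ⊆ G ∧ G ⊆ W)) : incidenceSign e G * incidenceSign G W = 0 := by
  rcases not_and_or.1 h with h | h
  · rw [incidenceSign_eq_zero_of_not_subset h, zero_mul]
  · rw [incidenceSign_eq_zero_of_not_subset h, mul_zero]

theorem signedBoundary_mulVec_simplexBoundary {i : ℕ} {W : Finset (Fin n)}
    (hW : W.card = i + 3) (hfacets : ∀ r ∈ W, W.erase r ∈ K.faces) :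
    K.signedBoundary i *ᵥ K.simplexBoundary i W = 0 := by
  funext e
  have he : (e : Finset (Fin n)).card = i + 1 := (mem_iFaces.1 e.2).2
  change ∑ G : K.iFaces (i + 1), incidenceSign (e : Finset (Fin n)) G * incidenceSign G W = 0
  rw [sum_coe_sort (K.iFaces (i + 1)) fun G => incidenceSign e G * incidenceSign G W]
  by_cases heW : (e : Finset (Fin n)) ⊆ W
  swap
  · exact sum_eq_zero fun G _ =>
      incidenceSign_mul_incidenceSign_eq_zero fun h => heW (h.1.trans h.2)
  obtain ⟨p, q, hpq, hWe⟩ : ∃ p q, p ≠ q ∧ W \ e = {p, q} :=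
    card_eq_two.1 (by rw [card_sdiff_of_subset heW, hW, he]; omega)
  have hpW : p ∈ W := (mem_sdiff.1 (hWe ▸ mem_insert_self p {q})).1
  have hqW : q ∈ W := (mem_sdiff.1 (hWe ▸ mem_insert_of_mem (mem_singleton_self q))).1
  have he_eq : (e : Finset (Fin n)) = (W.erase p).erase q := by
    rw [← Finset.sdiff_sdiff_eq_self heW, hWe, sdiff_insert, sdiff_singleton_eq_erase,
      erase_right_comm]
  have hface : ∀ r ∈ W, W.erase r ∈ K.iFaces (i + 1) := fun r hr =>
    mem_iFaces.2 ⟨hfacets r hr, by rw [card_erase_of_mem hr, hW]; omega⟩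
  have hne : W.erase p ≠ W.erase q := fun h =>
    (mem_erase.1 (h ▸ mem_erase.2 ⟨hpq.symm, hqW⟩ : q ∈ W.erase q)).1 rfl
  rw [← sum_subset (s₁ := {W.erase p, W.erase q}), sum_pair hne]
  · exact incidenceSign_erase_mul_add_eq_zero hpW hqW hpq he_eq
  · simpa [insert_subset_iff] using ⟨hface p hpW, hface q hqW⟩
  refine fun G hG hGpq => incidenceSign_mul_incidenceSign_eq_zero fun ⟨heG, hGW⟩ => ?_
  obtain ⟨r, hr⟩ : ∃ r, W \ G = {r} :=
    card_eq_one.1 (by rw [card_sdiff_of_subset hGW, hW, (mem_iFaces.1 hG).2]; omega)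
  have hrWG : r ∈ W \ G := hr ▸ mem_singleton_self r
  have hGr : G = W.erase r := by
    rw [← Finset.sdiff_sdiff_eq_self hGW, hr, sdiff_singleton_eq_erase]
  have hrpq : r ∈ ({p, q} : Finset (Fin n)) :=
    hWe ▸ mem_sdiff.2 ⟨(mem_sdiff.1 hrWG).1, fun h => (mem_sdiff.1 hrWG).2 (heG h)⟩
  rcases mem_insert.1 hrpq with rfl | h
  · exact hGpq (hGr ▸ mem_insert_self _ _)
  · rw [mem_singleton.1 h] at hGr
    exact hGpq (hGr ▸ mem_insert_of_mem (mem_singleton_self _))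

theorem mem_Mu {F : Finset (Fin n)} : F ∈ K.Mu u ↔ F ∈ K.iFaces 2 ∧ u ∉ F :=
  mem_filter

theorem mem_Muc {F : Finset (Fin n)} : F ∈ K.Muc u ↔ F ∈ K.iFaces 2 ∧ u ∈ F := by
  rw [Muc, mem_sdiff, mem_Mu, not_and, not_not]
  exact ⟨fun h => ⟨h.1, h.2 h.1⟩, fun h => ⟨h.1, fun _ => h.2⟩⟩

theorem mem_downNbrs {F G : Finset (Fin n)} :
    G ∈ K.downNbrs F ↔ G ∈ K.iFaces 2 ∧ G ≠ F ∧ (G ∩ F).card = 2 :=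
  mem_filter

theorem mem_downNbrs_comm {F G : Finset (Fin n)} (hF : F ∈ K.iFaces 2)
    (hG : G ∈ K.downNbrs F) : F ∈ K.downNbrs G := by
  obtain ⟨-, hne, hcard⟩ := mem_downNbrs.1 hG
  exact mem_downNbrs.2 ⟨hF, hne.symm, inter_comm G F ▸ hcard⟩

theorem card_inter_le_two_of_ne {F G : Finset (Fin n)} (hF : F.card = 3) (hG : G.card = 3)
    (hne : G ≠ F) : (G ∩ F).card ≤ 2 := by
  by_contra! h
  have hGF : G ∩ F = G := eq_of_subset_of_card_le inter_subset_left (by omega)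
  exact hne (eq_of_subset_of_card_le (hGF ▸ inter_subset_right) (by omega))

theorem two_le_card_inter {F G : Finset (Fin n)} {a b : Fin n} (hab : a ≠ b)
    (haG : a ∈ G) (hbG : b ∈ G) (haF : a ∈ F) (hbF : b ∈ F) : 2 ≤ (G ∩ F).card :=
  card_pair hab ▸ card_le_card (insert_subset (mem_inter.2 ⟨haG, haF⟩)
    (singleton_subset_iff.2 (mem_inter.2 ⟨hbG, hbF⟩)))

theorem card_inter_lt_two {F G : Finset (Fin n)} (hF : F ∈ K.iFaces 2) (hG : G ∈ K.iFaces 2)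
    (hGF : G ∉ insert F (K.downNbrs F)) : (G ∩ F).card < 2 := by
  rw [mem_insert, mem_downNbrs, not_or, not_and, not_and] at hGF
  have := card_inter_le_two_of_ne (mem_iFaces.1 hF).2 (mem_iFaces.1 hG).2 hGF.1
  have := hGF.2 hG hGF.1
  omega

def downNbrsMuc (K : SimplicialComplex n) (u : Fin n) (F : Finset (Fin n)) :
    Finset (Finset (Fin n)) :=
  (K.downNbrs F).filter (u ∈ ·)

def downNbrsMu (K : SimplicialComplex n) (u : Fin n) (F : Finset (Fin n)) :
    Finset (Finset (Fin n)) :=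
  (K.downNbrs F).filter (u ∉ ·)

theorem mem_downNbrsMuc {F G : Finset (Fin n)} :
    G ∈ K.downNbrsMuc u F ↔ G ∈ K.downNbrs F ∧ u ∈ G :=
  mem_filter

theorem downNbrsMuc_subset_Muc (F : Finset (Fin n)) : K.downNbrsMuc u F ⊆ K.Muc u :=
  fun _ hG => mem_Muc.2 ⟨(mem_downNbrs.1 (mem_downNbrsMuc.1 hG).1).1, (mem_downNbrsMuc.1 hG).2⟩

theorem downNbrsMu_subset_erase (F : Finset (Fin n)) : K.downNbrsMu u F ⊆ (K.Mu u).erase F := by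
  intro G hG
  obtain ⟨hG, hu⟩ := mem_filter.1 hG
  obtain ⟨hG, hne, -⟩ := mem_downNbrs.1 hG
  exact mem_erase.2 ⟨hne, mem_Mu.2 ⟨hG, hu⟩⟩

theorem sum_downNbrs_eq (g : Finset (Fin n) → ℝ) (F : Finset (Fin n)) :
    ∑ G ∈ K.downNbrs F, g G = ∑ G ∈ K.downNbrsMuc u F, g G + ∑ G ∈ K.downNbrsMu u F, g G :=
  (sum_filter_add_sum_filter_not _ _ _).symm

theorem downNbrsMuc_comm {F G : Finset (Fin n)} (hF : F ∈ K.Muc u)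
    (hG : G ∈ K.downNbrsMuc u F) : F ∈ K.downNbrsMuc u G :=
  mem_downNbrsMuc.2 ⟨mem_downNbrs_comm (mem_Muc.1 hF).1 (mem_downNbrsMuc.1 hG).1,
    (mem_Muc.1 hF).2⟩

theorem exists_eq_insert_of_mem_downNbrsMuc {F G : Finset (Fin n)} (hu : u ∈ F)
    (hG : G ∈ K.downNbrsMuc u F) : ∃ c ∈ F.erase u, ∃ x ∉ F, G = insert x {u, c} := by
  obtain ⟨hGd, huG⟩ := mem_downNbrsMuc.1 hG
  obtain ⟨hG2, -, hcard⟩ := mem_downNbrs.1 hGd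
  have huGF : u ∈ G ∩ F := mem_inter.2 ⟨huG, hu⟩
  obtain ⟨c, hc⟩ := card_eq_one.1 (by rw [card_erase_of_mem huGF, hcard])
  obtain ⟨x, hx⟩ := (card_eq_one (s := G \ F)).1 (by
    have := card_sdiff_add_card_inter G F
    rw [hcard, (mem_iFaces.1 hG2).2] at this
    omega)
  have hcmem : c ∈ (G ∩ F).erase u := hc ▸ mem_singleton_self c
  have hxmem : x ∈ G \ F := hx ▸ mem_singleton_self x
  refine ⟨c, mem_erase.2 ⟨(mem_erase.1 hcmem).1, (mem_inter.1 (mem_of_mem_erase hcmem)).2⟩, x,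
    (mem_sdiff.1 hxmem).2, ?_⟩
  rw [← sdiff_union_inter G F, hx, ← insert_erase huGF, hc, insert_eq x]

/-- A cone neighbour of `F` is determined by the edge it shares with `F`. -/
theorem card_downNbrsMuc_le_three {F : Finset (Fin n)} (hF : F ∈ K.iFaces 2) (hu : u ∉ F) :
    (K.downNbrsMuc u F).card ≤ 3 := by
  have hcone : ∀ G ∈ K.downNbrsMuc u F, insert u (G ∩ F) = G := by
    intro G hG
    obtain ⟨hG, huG⟩ := mem_downNbrsMuc.1 hG
    obtain ⟨hG, -, hcard⟩ := mem_downNbrs.1 hG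
    refine eq_of_subset_of_card_le (insert_subset huG inter_subset_left) ?_
    rw [(mem_iFaces.1 hG).2, card_insert_of_notMem fun h => hu (mem_inter.1 h).2, hcard]
  calc (K.downNbrsMuc u F).card ≤ (F.powersetCard 2).card := by
        refine card_le_card_of_injOn (· ∩ F) (fun G hG => ?_) fun G hG G' hG' h => ?_
        · exact mem_powersetCard.2
            ⟨inter_subset_right, (mem_downNbrs.1 (mem_downNbrsMuc.1 hG).1).2.2⟩
        · rw [← hcone G hG, ← hcone G' hG']
          exact congrArg (insert u) h
    _ = 3 := by rw [card_powersetCard, (mem_iFaces.1 hF).2]; rfl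

namespace Apex

theorem mem_iFaces_two (hA : K.Apex u) {F : Finset (Fin n)} (hu : u ∈ F) (hF : F.card = 3) :
    F ∈ K.iFaces 2 :=
  mem_iFaces.2 ⟨hA F hF hu, hF⟩

theorem mem_iFaces_one (hA : K.Apex u) (hn : 3 ≤ n) {e : Finset (Fin n)} (he : e.card = 2) :
    e ∈ K.iFaces 1 := by
  obtain ⟨F, heF, -, hF⟩ := exists_subsuperset_card_eq (n := 3) (subset_univ (insert u e))
    ((card_insert_le u e).trans (by omega)) (by rwa [card_univ, Fintype.card_fin])
  have huF : u ∈ F := heF (mem_insert_self u e)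
  exact mem_iFaces.2 ⟨K.down_closed F (hA F hF huF) e ((subset_insert u e).trans heF)
    (card_pos.1 (by omega)), he⟩

theorem erase_insert_mem_faces (hA : K.Apex u) {F : Finset (Fin n)} (hF : F ∈ K.Mu u)
    {r : Fin n} (hr : r ∈ insert u F) : (insert u F).erase r ∈ K.faces := by
  obtain ⟨hF, hu⟩ := mem_Mu.1 hF
  by_cases hru : r = u
  · rw [hru, erase_insert hu]
    exact (mem_iFaces.1 hF).1
  · refine hA _ ?_ (mem_erase.2 ⟨Ne.symm hru, mem_insert_self u F⟩)
    rw [card_erase_of_mem hr, card_insert_of_notMem hu, (mem_iFaces.1 hF).2]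

theorem card_Muc (hA : K.Apex u) : (K.Muc u).card = (n - 1).choose 2 := by
  rw [show (n - 1).choose 2 = ((univ.erase u).powersetCard 2).card by
    rw [card_powersetCard, card_erase_of_mem (mem_univ u), card_univ, Fintype.card_fin]]
  refine card_nbij' (fun F => F.erase u) (insert u) (fun F hF => ?_) (fun e he => ?_)
    (fun F hF => insert_erase (mem_Muc.1 hF).2) (fun e he => erase_insert fun hu => ?_)
  · obtain ⟨hF, hu⟩ := mem_Muc.1 hF
    rw [mem_coe, mem_powersetCard, card_erase_of_mem hu, (mem_iFaces.1 hF).2]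
    exact ⟨erase_subset_erase u (subset_univ F), rfl⟩
  · rw [mem_coe, mem_powersetCard] at he
    have hu : u ∉ e := fun hu => (mem_erase.1 (he.1 hu)).1 rfl
    exact mem_Muc.2 ⟨hA.mem_iFaces_two (mem_insert_self u e)
      (by rw [card_insert_of_notMem hu, he.2]), mem_insert_self u e⟩
  · rw [mem_coe, mem_powersetCard] at he
    exact (mem_erase.1 (he.1 hu)).1 rfl

theorem insert_mem_downNbrsMuc (hA : K.Apex u) {F : Finset (Fin n)} (hF : F ∈ K.Muc u)
    {c x : Fin n} (hcu : c ≠ u) (hc : c ∈ F) (hx : x ∉ F) :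
    insert x {u, c} ∈ K.downNbrsMuc u F := by
  have hucF : {u, c} ⊆ F := insert_subset (mem_Muc.1 hF).2 (singleton_subset_iff.2 hc)
  have hG3 : (insert x {u, c} : Finset (Fin n)).card = 3 := by
    rw [card_insert_of_notMem fun h => hx (hucF h), card_pair hcu.symm]
  have hu : u ∈ insert x {u, c} := mem_insert_of_mem (mem_insert_self u _)
  refine mem_downNbrsMuc.2 ⟨mem_downNbrs.2 ⟨hA.mem_iFaces_two hu hG3, fun h => ?_, ?_⟩, hu⟩
  · exact hx (h ▸ mem_insert_self _ _)
  · rw [insert_inter_of_notMem hx, inter_eq_left.2 hucF, card_pair hcu.symm]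

theorem card_downNbrsMuc (hA : K.Apex u) {F : Finset (Fin n)} (hF : F ∈ K.Muc u) :
    (K.downNbrsMuc u F).card = 2 * (n - 3) := by
  have hFu := hF
  obtain ⟨hF, hu⟩ := mem_Muc.1 hF
  have hinter : ∀ c ∈ F, ∀ x ∉ F, insert x {u, c} ∩ F = {u, c} := fun c hc x hx => by
    rw [insert_inter_of_notMem hx, inter_eq_left]
    exact insert_subset hu (singleton_subset_iff.2 hc)
  have hsdiff : ∀ c ∈ F, ∀ x ∉ F, insert x {u, c} \ F = {x} := fun c hc x hx => by
    rw [insert_sdiff_of_notMem _ hx, sdiff_eq_empty_iff_subset.2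
      (insert_subset hu (singleton_subset_iff.2 hc))]
    rfl
  have hcard : ((F.erase u) ×ˢ Fᶜ).card = 2 * (n - 3) := by
    rw [card_product, card_erase_of_mem hu, card_compl, (mem_iFaces.1 hF).2, Fintype.card_fin]
  rw [← hcard]
  symm
  refine card_nbij (fun p => insert p.2 {u, p.1}) (fun p hp => ?_) (fun p hp p' hp' h => ?_)
    (fun G hG => ?_)
  · simp only [coe_product, Set.mem_prod, mem_coe, mem_erase, mem_compl] at hp
    exact insert_mem_downNbrsMuc hA hFu hp.1.1 hp.1.2 hp.2
  · simp only [coe_product, Set.mem_prod, mem_coe, mem_erase, mem_compl] at hp hp'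
    obtain ⟨⟨hcu, hc⟩, hx⟩ := hp
    obtain ⟨⟨hcu', hc'⟩, hx'⟩ := hp'
    have h1 := congrArg (fun G => (G ∩ F).erase u) h
    have h2 := congrArg (· \ F) h
    simp only [hinter _ hc _ hx, hinter _ hc' _ hx', erase_insert (notMem_singleton.2 hcu.symm),
      erase_insert (notMem_singleton.2 hcu'.symm), singleton_inj] at h1
    simp only [hsdiff _ hc _ hx, hsdiff _ hc' _ hx', singleton_inj] at h2
    exact Prod.ext h1 h2
  · obtain ⟨c, hc, x, hx, rfl⟩ := exists_eq_insert_of_mem_downNbrsMuc hu hG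
    exact ⟨(c, x), mem_product.2 ⟨hc, mem_compl.2 hx⟩, rfl⟩

/-- A cone face meeting `F` only in the apex is reached in two steps, through the cone over
`u`, a vertex of `F ∖ {u}` and a vertex of `G ∖ {u}`. -/
theorem exists_mem_downNbrsMuc (hA : K.Apex u) {F G : Finset (Fin n)} (hF : F ∈ K.Muc u)
    (hG : G ∈ K.Muc u) (hGF : G ∉ insert F (K.downNbrs F)) :
    ∃ H ∈ K.downNbrsMuc u F, G ∈ K.downNbrsMuc u H := by
  obtain ⟨hF2, huF⟩ := mem_Muc.1 hF
  obtain ⟨hG2, huG⟩ := mem_Muc.1 hG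
  have hF3 : F.card = 3 := (mem_iFaces.1 hF2).2
  have hG3 : G.card = 3 := (mem_iFaces.1 hG2).2
  have hGF1 := card_inter_lt_two hF2 hG2 hGF
  have hsep : ∀ x ∈ G, x ∈ F → x = u := fun x hxG hxF => by
    by_contra hxu
    have := two_le_card_inter hxu hxG huG hxF huF
    omega
  obtain ⟨v, hv⟩ : (F.erase u).Nonempty := by
    rw [← card_pos, card_erase_of_mem huF, hF3]; norm_num
  obtain ⟨a, ha⟩ : (G.erase u).Nonempty := by
    rw [← card_pos, card_erase_of_mem huG, hG3]; norm_num
  obtain ⟨hvu, hvF⟩ := mem_erase.1 hv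
  obtain ⟨hau, haG⟩ := mem_erase.1 ha
  have haF : a ∉ F := fun h => hau (hsep a haG h)
  have hvG : v ∉ G := fun h => hvu (hsep v h hvF)
  have hH := insert_mem_downNbrsMuc hA hF hvu hvF haF
  have hH3 : (insert a {u, v} : Finset (Fin n)).card = 3 :=
    (mem_iFaces.1 (mem_downNbrs.1 (mem_downNbrsMuc.1 hH).1).1).2
  have hGH : (G ∩ insert a {u, v}).card = 2 := le_antisymm
    (card_inter_le_two_of_ne hH3 hG3 fun h => hvG (h ▸ by simp))
    (two_le_card_inter hau.symm huG haG (by simp) (mem_insert_self a _))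
  exact ⟨insert a {u, v}, hH,
    mem_downNbrsMuc.2 ⟨mem_downNbrs.2 ⟨hG2, fun h => hvG (h ▸ by simp), hGH⟩, huG⟩⟩

theorem card_Muc_sdiff_insert_downNbrs (hA : K.Apex u) {F₀ : Finset (Fin n)}
    (hF₀ : F₀ ∈ K.Muc u) :
    ((K.Muc u \ insert F₀ (K.downNbrs F₀)).card : ℝ) = (n : ℝ) ^ 2 / 2 - 7 * n / 2 + 6 := by
  have hn : 3 ≤ n := by
    simpa [(mem_iFaces.1 (mem_Muc.1 hF₀).1).2] using card_le_univ F₀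
  have heq : K.Muc u \ insert F₀ (K.downNbrs F₀) = K.Muc u \ insert F₀ (K.downNbrsMuc u F₀) := by
    ext G
    simp only [mem_sdiff, mem_insert, mem_downNbrsMuc, mem_Muc]
    tauto
  have hsub : insert F₀ (K.downNbrsMuc u F₀) ⊆ K.Muc u :=
    insert_subset hF₀ (downNbrsMuc_subset_Muc F₀)
  have hcard : (insert F₀ (K.downNbrsMuc u F₀)).card = 2 * (n - 3) + 1 := by
    rw [card_insert_of_notMem fun h => (mem_downNbrs.1 (mem_downNbrsMuc.1 h).1).2.1 rfl,
      hA.card_downNbrsMuc hF₀]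
  have hle := card_le_card hsub
  rw [hcard, hA.card_Muc] at hle
  rw [heq, card_sdiff_of_subset hsub, hcard, hA.card_Muc, Nat.cast_sub hle, Nat.cast_choose_two]
  push_cast [Nat.cast_sub (by omega : 1 ≤ n), Nat.cast_sub hn]
  ring

end Apex

/-- Coning a face of `M_u` off `u` gives a tetrahedron all of whose facets lie in `K`; these
boundary cycles are independent because each one meets `M_u` only in its own face. -/
theorem card_Mu_le_betti (hA : K.Apex u) (hP : K.IsPure 2) : (K.Mu u).card ≤ K.betti 2 := by
  let b : K.Mu u → K.iFaces 2 → ℝ := fun F => K.simplexBoundary 1 (insert u F)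
  have hb_ker : Set.range b ⊆ LinearMap.ker (K.signedBoundary 1).mulVecLin := by
    rintro _ ⟨F, rfl⟩
    have hu : u ∉ (F : Finset (Fin n)) := (mem_Mu.1 F.2).2
    refine signedBoundary_mulVec_simplexBoundary ?_ fun r hr => hA.erase_insert_mem_faces F.2 hr
    rw [card_insert_of_notMem hu, (mem_iFaces.1 (mem_Mu.1 F.2).1).2]
  have hb_apply : ∀ F G : K.Mu u, b F ⟨G, (mem_Mu.1 G.2).1⟩ ≠ 0 ↔ F = G := by
    intro F G
    have hu : ∀ H : K.Mu u, u ∉ (H : Finset (Fin n)) := fun H => (mem_Mu.1 H.2).2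
    constructor
    · intro h
      by_contra hFG
      refine h (incidenceSign_eq_zero_of_not_subset fun hGF => hFG (Subtype.ext ?_))
      refine (eq_of_subset_of_card_le (fun x hx => ?_) ?_).symm
      · exact (mem_insert.1 (hGF hx)).resolve_left fun hxu => hu G (hxu ▸ hx)
      · rw [(mem_iFaces.1 (mem_Mu.1 F.2).1).2, (mem_iFaces.1 (mem_Mu.1 G.2).1).2]
    · rintro rfl
      change incidenceSign _ _ ≠ 0
      nth_rewrite 1 [← erase_insert (hu F)]
      rw [incidenceSign_erase (mem_insert_self u _)]
      exact pow_ne_zero _ (by norm_num)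
  have hb_indep : LinearIndependent ℝ b := by
    refine Fintype.linearIndependent_iff.2 fun c hc G => ?_
    have hG := congrFun hc ⟨G, (mem_Mu.1 G.2).1⟩
    simp only [Finset.sum_apply, Pi.smul_apply, smul_eq_mul, Pi.zero_apply] at hG
    rw [sum_eq_single G (fun F _ hFG => by
      rw [not_ne_iff.1 (mt (hb_apply F G).1 hFG), mul_zero]) (by simp)] at hG
    exact (mul_eq_zero.1 hG).resolve_right ((hb_apply G G).2 rfl)
  calc (K.Mu u).card = Module.finrank ℝ (Submodule.span ℝ (Set.range b)) := by
        rw [finrank_span_eq_card hb_indep, Fintype.card_coe]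
    _ ≤ Module.finrank ℝ (LinearMap.ker (K.signedBoundary 1).mulVecLin) :=
        Submodule.finrank_mono (Submodule.span_le.2 hb_ker)
    _ = K.betti 2 := (betti_eq_finrank_ker_of_isPure hP).symm

theorem mul_apply_eq_sum_bSum {i : ℕ} {f : K.iFaces i → ℝ} {q : ℝ}
    (hQ : K.Qup i *ᵥ f = q • f) (e : K.iFaces i) :
    q * f e = ∑ F : K.iFaces (i + 1), if (e : Finset (Fin n)) ⊆ F then K.bSum i f F else 0 := by
  rw [← smul_eq_mul, ← Pi.smul_apply, ← hQ, mulVec, dotProduct]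
  simp only [Qup, signlessInc, mul_apply, transpose_apply, of_apply, sum_mul, bSum]
  rw [sum_comm]
  refine sum_congr rfl fun F _ => ?_
  split_ifs with heF
  · refine sum_congr rfl fun e' _ => ?_
    split_ifs <;> simp
  · simp

theorem mul_bSum_eq_sum_card_mul {i : ℕ} {f : K.iFaces i → ℝ} {q : ℝ}
    (hQ : K.Qup i *ᵥ f = q • f) (F : Finset (Fin n)) :
    q * K.bSum i f F = ∑ G : K.iFaces (i + 1),
      (((K.iFaces i).filter (· ⊆ F ∩ G)).card : ℝ) * K.bSum i f G := by
  calc q * K.bSum i f F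
      = ∑ e : K.iFaces i, ∑ G : K.iFaces (i + 1),
          if (e : Finset (Fin n)) ⊆ F ∩ G then K.bSum i f G else 0 := by
        rw [bSum, mul_sum]
        refine sum_congr rfl fun e _ => ?_
        split_ifs with heF
        · simp only [mul_apply_eq_sum_bSum hQ, subset_inter_iff, heF, true_and]
        · simp only [mul_zero, subset_inter_iff, heF, false_and, if_false, sum_const_zero]
    _ = _ := by
        rw [sum_comm]
        refine sum_congr rfl fun G _ => ?_
        rw [sum_coe_sort (K.iFaces i) fun e => if e ⊆ F ∩ G then K.bSum i f G else 0,
          ← sum_filter, sum_const, nsmul_eq_mul]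

/-- With a complete 1-skeleton, two 2-faces sharing `k` vertices share `k.choose 2` edges, so only
`F` itself (three edges) and its down neighbours (one edge) contribute. -/
theorem mul_bSum_eq_three_mul_add_sum_downNbrs
    (hE : ∀ e : Finset (Fin n), e.card = 2 → e ∈ K.iFaces 1) {f : K.iFaces 1 → ℝ} {q : ℝ}
    (hQ : K.Qup 1 *ᵥ f = q • f) {F : Finset (Fin n)} (hF : F ∈ K.iFaces 2) :
    q * K.bSum 1 f F = 3 * K.bSum 1 f F + ∑ G ∈ K.downNbrs F, K.bSum 1 f G := by
  have hF3 : F.card = 3 := (mem_iFaces.1 hF).2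
  have hcount : ∀ G, ((K.iFaces 1).filter (· ⊆ F ∩ G)).card = (F ∩ G).card.choose 2 := by
    intro G
    rw [← card_powersetCard]
    congr 1
    ext e
    rw [mem_filter, mem_powersetCard]
    exact ⟨fun h => ⟨h.2, (mem_iFaces.1 h.1).2⟩, fun h => ⟨hE e h.2, h.1⟩⟩
  rw [mul_bSum_eq_sum_card_mul hQ,
    sum_coe_sort (K.iFaces 2) fun G => (((K.iFaces 1).filter (· ⊆ F ∩ G)).card : ℝ) *
      K.bSum 1 f G,
    ← sum_subset (insert_subset hF fun G hG => (mem_downNbrs.1 hG).1) fun G hG hGF => by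
      rw [hcount, inter_comm, Nat.choose_eq_zero_of_lt (card_inter_lt_two hF hG hGF), Nat.cast_zero,
        zero_mul],
    sum_insert fun h => (mem_downNbrs.1 h).2.1 rfl, hcount, inter_self, hF3]
  congr 1
  refine sum_congr rfl fun G hG => ?_
  rw [hcount, inter_comm, (mem_downNbrs.1 hG).2.2]
  simp

structure IsBoundedDownEigenvector (K : SimplicialComplex n) (q : ℝ) (g : Finset (Fin n) → ℝ) :
    Prop where
  nonneg : ∀ F ∈ K.iFaces 2, 0 ≤ g F
  le_one : ∀ F ∈ K.iFaces 2, g F ≤ 1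
  eigen : ∀ F ∈ K.iFaces 2, (q - 3) * g F = ∑ G ∈ K.downNbrs F, g G

theorem isBoundedDownEigenvector_bSum
    (hE : ∀ e : Finset (Fin n), e.card = 2 → e ∈ K.iFaces 1) {f : K.iFaces 1 → ℝ} {q : ℝ}
    (hf : ∀ e, 0 ≤ f e) (hQ : K.Qup 1 *ᵥ f = q • f) (hle : ∀ F ∈ K.iFaces 2, K.bSum 1 f F ≤ 1) :
    IsBoundedDownEigenvector K q (K.bSum 1 f) where
  nonneg _ _ := sum_nonneg fun e _ => by split_ifs <;> simp [hf e]
  le_one := hle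
  eigen F hF := by
    rw [sub_mul, mul_bSum_eq_three_mul_add_sum_downNbrs hE hQ hF]
    ring

namespace IsBoundedDownEigenvector

variable {q : ℝ} {g : Finset (Fin n) → ℝ}

theorem sum_le_card (hg : IsBoundedDownEigenvector K q g) {s : Finset (Finset (Fin n))}
    (hs : s ⊆ K.iFaces 2) : ∑ F ∈ s, g F ≤ s.card := by
  simpa using sum_le_card_nsmul s g 1 fun F hF => hg.le_one F (hs hF)

theorem sub_three_mul_eq (hg : IsBoundedDownEigenvector K q g) {F : Finset (Fin n)}
    (hF : F ∈ K.iFaces 2) :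
    (q - 3) * g F = ∑ G ∈ K.downNbrsMuc u F, g G + ∑ G ∈ K.downNbrsMu u F, g G := by
  rw [hg.eigen F hF, sum_downNbrs_eq]

theorem sub_three_mul_le_of_mem_Mu (hg : IsBoundedDownEigenvector K q g) {t : ℕ}
    (hMu : (K.Mu u).card ≤ t) {F : Finset (Fin n)} (hF : F ∈ K.Mu u) :
    (q - 3) * g F ≤ t + 2 := by
  obtain ⟨hF2, hu⟩ := mem_Mu.1 hF
  have hMuc : ∑ G ∈ K.downNbrsMuc u F, g G ≤ 3 :=
    (hg.sum_le_card ((downNbrsMuc_subset_Muc F).trans sdiff_subset)).trans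
      (by exact_mod_cast card_downNbrsMuc_le_three hF2 hu)
  have hMu' : ∑ G ∈ K.downNbrsMu u F, g G ≤ t - 1 := by
    have hsub := downNbrsMu_subset_erase (K := K) (u := u) F
    refine (hg.sum_le_card (hsub.trans ((erase_subset _ _).trans (filter_subset _ _)))).trans ?_
    have := card_le_card hsub
    have := card_erase_add_one hF
    rw [le_sub_iff_add_le]
    exact_mod_cast (by omega : (K.downNbrsMu u F).card + 1 ≤ t)
  rw [hg.sub_three_mul_eq hF2]
  linarith

theorem sub_three_mul_sum_downNbrsMu_le (hg : IsBoundedDownEigenvector K q g) {t : ℕ}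
    (hMu : (K.Mu u).card ≤ t) (F : Finset (Fin n)) :
    (q - 3) * ∑ G ∈ K.downNbrsMu u F, g G ≤ t * (t + 2) := by
  have hcard : ((K.downNbrsMu u F).card : ℝ) ≤ t := by
    exact_mod_cast ((card_le_card (downNbrsMu_subset_erase F)).trans (card_erase_le)).trans hMu
  rw [mul_sum]
  calc ∑ G ∈ K.downNbrsMu u F, (q - 3) * g G ≤ (K.downNbrsMu u F).card • ((t : ℝ) + 2) :=
        sum_le_card_nsmul _ _ _ fun G hG =>
          hg.sub_three_mul_le_of_mem_Mu hMu (mem_of_mem_erase (downNbrsMu_subset_erase F hG))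
    _ ≤ t * (t + 2) := by
        rw [nsmul_eq_mul]
        exact mul_le_mul_of_nonneg_right hcard (by positivity)

/-- Sum the eigen-equation over the cone `M_u^c`: each cone face is counted once for each of its
`2(n - 3)` cone neighbours. -/
theorem two_mul_sub_three_le_sub_three (hg : IsBoundedDownEigenvector K q g) (hA : K.Apex u)
    {F₀ : Finset (Fin n)} (hF₀ : F₀ ∈ K.Muc u) (hpos : 0 < g F₀) :
    ((2 * (n - 3) : ℕ) : ℝ) ≤ q - 3 := by
  have hnonneg : ∀ G ∈ K.Muc u, 0 ≤ g G := fun G hG => hg.nonneg G (mem_Muc.1 hG).1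
  have hs : 0 < ∑ G ∈ K.Muc u, g G :=
    hpos.trans_le (single_le_sum hnonneg hF₀)
  refine le_of_mul_le_mul_right ?_ hs
  calc ((2 * (n - 3) : ℕ) : ℝ) * ∑ G ∈ K.Muc u, g G
      = ∑ F ∈ K.Muc u, ∑ G ∈ K.downNbrsMuc u F, g G := by
        rw [sum_comm' (t' := K.Muc u) (s' := K.downNbrsMuc u), mul_sum]
        · refine sum_congr rfl fun G hG => ?_
          rw [sum_const, nsmul_eq_mul, hA.card_downNbrsMuc hG]
        · exact fun F G => ⟨fun h => ⟨downNbrsMuc_comm h.1 h.2, downNbrsMuc_subset_Muc F h.2⟩,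
            fun h => ⟨downNbrsMuc_subset_Muc G h.1, downNbrsMuc_comm h.2 h.1⟩⟩
    _ ≤ ∑ F ∈ K.Muc u, (q - 3) * g F := by
        refine sum_le_sum fun F hF => ?_
        rw [hg.sub_three_mul_eq (mem_Muc.1 hF).1]
        exact le_add_of_nonneg_right (sum_nonneg fun G hG =>
          hg.nonneg G (mem_downNbrs.1 (mem_filter.1 hG).1).1)
    _ = (q - 3) * ∑ G ∈ K.Muc u, g G := (mul_sum _ _ _).symm

theorem sum_downNbrsMuc_one_sub_le (hg : IsBoundedDownEigenvector K q g) (hA : K.Apex u)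
    (hq : ((2 * (n - 3) : ℕ) : ℝ) ≤ q - 3) {F : Finset (Fin n)} (hF : F ∈ K.Muc u) :
    ∑ G ∈ K.downNbrsMuc u F, (1 - g G)
      ≤ (q - 3) * (1 - g F) + ∑ G ∈ K.downNbrsMu u F, g G := by
  have h := hg.sub_three_mul_eq (u := u) (mem_Muc.1 hF).1
  rw [sum_sub_distrib, sum_const, nsmul_one, hA.card_downNbrsMuc hF]
  linarith

theorem sub_three_mul_sum_downNbrsMuc_one_sub_le (hg : IsBoundedDownEigenvector K q g)
    (hA : K.Apex u) (hq : ((2 * (n - 3) : ℕ) : ℝ) ≤ q - 3) (hq3 : 0 < q - 3) {t : ℕ}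
    (hMu : (K.Mu u).card ≤ t) {F₀ : Finset (Fin n)} (hF₀ : F₀ ∈ K.Muc u) (hgF₀ : g F₀ = 1) :
    (q - 3) * ∑ H ∈ K.downNbrsMuc u F₀, (1 - g H) ≤ t * (t + 2) := by
  calc (q - 3) * ∑ H ∈ K.downNbrsMuc u F₀, (1 - g H)
      ≤ (q - 3) * ((q - 3) * (1 - g F₀) + ∑ G ∈ K.downNbrsMu u F₀, g G) :=
        mul_le_mul_of_nonneg_left (hg.sum_downNbrsMuc_one_sub_le hA hq hF₀) hq3.le
    _ ≤ t * (t + 2) := by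
        rw [hgF₀, sub_self, mul_zero, zero_add]
        exact hg.sub_three_mul_sum_downNbrsMu_le hMu F₀

theorem sum_downNbrsMuc_sum_downNbrsMu_le (hg : IsBoundedDownEigenvector K q g) (hA : K.Apex u)
    (hq : ((2 * (n - 3) : ℕ) : ℝ) ≤ q - 3) (hq3 : 0 < q - 3) {t : ℕ}
    (hMu : (K.Mu u).card ≤ t) {F₀ : Finset (Fin n)} (hF₀ : F₀ ∈ K.Muc u) :
    ∑ H ∈ K.downNbrsMuc u F₀, ∑ G ∈ K.downNbrsMu u H, g G ≤ t * (t + 2) := by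
  have hH : ∀ H, ∑ G ∈ K.downNbrsMu u H, g G ≤ t * (t + 2) / (q - 3) := fun H => by
    rw [le_div_iff₀ hq3, mul_comm]
    exact hg.sub_three_mul_sum_downNbrsMu_le hMu H
  calc ∑ H ∈ K.downNbrsMuc u F₀, ∑ G ∈ K.downNbrsMu u H, g G
      ≤ (K.downNbrsMuc u F₀).card • (t * (t + 2) / (q - 3)) :=
        sum_le_card_nsmul _ _ _ fun H _ => hH H
    _ ≤ (q - 3) * (t * (t + 2) / (q - 3)) := by
        rw [nsmul_eq_mul, hA.card_downNbrsMuc hF₀]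
        exact mul_le_mul_of_nonneg_right hq (by positivity)
    _ = t * (t + 2) := mul_div_cancel₀ _ hq3.ne'

/-- The cone faces outside `{F₀} ∪ N^d(F₀)` lie two down-steps from `F₀`; their total deficiency is
controlled through the two levels of the eigen-equation, each costing `t (t + 2)`. -/
theorem sum_Muc_sdiff_one_sub_le (hg : IsBoundedDownEigenvector K q g) (hA : K.Apex u) {t : ℕ}
    (hMu : (K.Mu u).card ≤ t) {F₀ : Finset (Fin n)} (hF₀ : F₀ ∈ K.Muc u) (hgF₀ : g F₀ = 1)
    (hn : 4 ≤ n) :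
    ∑ G ∈ K.Muc u \ insert F₀ (K.downNbrs F₀), (1 - g G) ≤ 2 * (t * (t + 2)) := by
  have hq := hg.two_mul_sub_three_le_sub_three hA hF₀ (by rw [hgF₀]; norm_num)
  have hq3 : 0 < q - 3 := lt_of_lt_of_le (by exact_mod_cast (by omega : 0 < 2 * (n - 3))) hq
  calc ∑ G ∈ K.Muc u \ insert F₀ (K.downNbrs F₀), (1 - g G)
      ≤ ∑ H ∈ K.downNbrsMuc u F₀, ∑ G ∈ K.downNbrsMuc u H, (1 - g G) :=
        sum_le_sum_sum_of_forall_exists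
          (fun H _ G hG => sub_nonneg.2 (hg.le_one G (mem_Muc.1 (downNbrsMuc_subset_Muc H hG)).1))
          fun G hG => hA.exists_mem_downNbrsMuc hF₀ (mem_sdiff.1 hG).1 (mem_sdiff.1 hG).2
    _ ≤ ∑ H ∈ K.downNbrsMuc u F₀, ((q - 3) * (1 - g H) + ∑ G ∈ K.downNbrsMu u H, g G) :=
        sum_le_sum fun H hH =>
          hg.sum_downNbrsMuc_one_sub_le hA hq (downNbrsMuc_subset_Muc F₀ hH)
    _ = (q - 3) * ∑ H ∈ K.downNbrsMuc u F₀, (1 - g H)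
          + ∑ H ∈ K.downNbrsMuc u F₀, ∑ G ∈ K.downNbrsMu u H, g G := by
        rw [sum_add_distrib, mul_sum]
    _ ≤ 2 * (t * (t + 2)) := by
        linarith [hg.sub_three_mul_sum_downNbrsMuc_one_sub_le hA hq hq3 hMu hF₀ hgF₀,
          hg.sum_downNbrsMuc_sum_downNbrsMu_le hA hq hq3 hMu hF₀]

end IsBoundedDownEigenvector

end SimplicialComplex

open SimplicialComplex in
/-- under the Setup with `t = 2` plus the Apex assumption, for large `n`:
`| ∑_{F ∈ M_u^c ∖ ({F₀} ∪ N^d(F₀))} f(∂F) − (n²/2 − 7n/2) | ≤ C`. -/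
theorem stmt16 :
    ∃ (C : ℝ) (N : ℕ), ∀ n, N ≤ n → ∀ (K : SimplicialComplex n) (f : ↥(K.iFaces 1) → ℝ)
      (u v w : Fin n), Setup n 2 K f u v w → K.Apex u →
      |(∑ F ∈ K.Muc u \ insert ({u,v,w} : Finset (Fin n)) (K.downNbrs {u,v,w}),
          K.bSum 1 f F) - ((n:ℝ)^2/2 - 7*(n:ℝ)/2)| ≤ C := by
  refine ⟨10, 4, fun n hn K f u v w hSetup hA => ?_⟩
  obtain ⟨⟨hP, hβ⟩, -, -, hf, hQ, hF₀, hle, hgF₀, -, -⟩ := hSetup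
  have hg := isBoundedDownEigenvector_bSum (fun e he => hA.mem_iFaces_one (by omega) he) hf hQ hle
  have hMu : (K.Mu u).card ≤ 2 := hβ ▸ card_Mu_le_betti hA hP
  have hF₀u : {u, v, w} ∈ K.Muc u := mem_Muc.2 ⟨hF₀, mem_insert_self u _⟩
  have hdef := hg.sum_Muc_sdiff_one_sub_le hA hMu hF₀u hgF₀ hn
  have hdef_nonneg : 0 ≤ ∑ G ∈ K.Muc u \ insert {u, v, w} (K.downNbrs {u, v, w}),
      (1 - K.bSum 1 f G) :=
    sum_nonneg fun G hG => sub_nonneg.2 (hle G (mem_Muc.1 (mem_sdiff.1 hG).1).1)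
  rw [sum_sub_distrib, sum_const, nsmul_one, hA.card_Muc_sdiff_insert_downNbrs hF₀u]
    at hdef hdef_nonneg
  rw [abs_le]
  push_cast at hdef
  constructor <;> linarith
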